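/- arXiv:1703.07500 — 3 statements merged into one kernel-verified Lean document; each statement's English description precedes it below -/
import Mathlib

section
/- (Theorem 1, converse: no perfect predictor when B lacks full column rank.) Let A be a real m×p matrix, B a real m×q matrix, d ∈ ℝ^m, let J_L ∈ ℝ^p, J_Y ∈ ℝ^q, J_Z ∈ ℝ^r be row vectors and v_Z ∈ ℝ^r fixed. Suppose there exists w ∈ ℝ^q with B·w = 0 and J_Y·w ≠ 0, and suppose there exists at least one feasible pair (v_L⁰, v_Y⁰) with A·v_L⁰ + B·v_Y⁰ = d. Then there is no function φ : ℝ^p → ℝ such that φ(v_L) = J_L·v_L + J_Y·v_Y + J_Z·v_Z for every pair (v_L, v_Y) satisfying A·v_L + B·v_Y = d. -/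
/-! Translating `v_Y` by `w` keeps the pair feasible and leaves `v_L` unchanged, yet shifts the
pseudo-boundary injection by `J_Y·w ≠ 0`; a function of `v_L` alone cannot follow both values. -/

open Matrix

theorem Matrix.mulVec_add_eq_of_mulVec_eq_zero {m n R : Type*} [Fintype n]
    [NonUnitalNonAssocSemiring R] (B : Matrix m n R) (v : n → R) {w : n → R}
    (hw : B *ᵥ w = 0) : B *ᵥ (v + w) = B *ᵥ v := by
  rw [mulVec_add, hw, add_zero]

/-- Theorem 1, converse: if `B·w = 0` for some `w` with `J_Y·w ≠ 0` and the
constraint set is nonempty, then no function of `v_L` alone can reproduce the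
pseudo-boundary injection `J_L·v_L + J_Y·v_Y + J_Z·v_Z` on all feasible pairs. -/
theorem no_perfect_predictor {m p q r : ℕ}
    (A : Matrix (Fin m) (Fin p) ℝ) (B : Matrix (Fin m) (Fin q) ℝ) (d : Fin m → ℝ)
    (JL : Fin p → ℝ) (JY : Fin q → ℝ) (JZ : Fin r → ℝ) (vZ : Fin r → ℝ)
    (w : Fin q → ℝ) (hBw : B.mulVec w = 0) (hJYw : JY ⬝ᵥ w ≠ 0)
    (vL0 : Fin p → ℝ) (vY0 : Fin q → ℝ)
    (hfeas : A.mulVec vL0 + B.mulVec vY0 = d) :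
    ¬ ∃ φ : (Fin p → ℝ) → ℝ,
        ∀ (vL : Fin p → ℝ) (vY : Fin q → ℝ),
          A.mulVec vL + B.mulVec vY = d →
          φ vL = JL ⬝ᵥ vL + JY ⬝ᵥ vY + JZ ⬝ᵥ vZ := by
  rintro ⟨φ, hφ⟩
  have hshifted : A *ᵥ vL0 + B *ᵥ (vY0 + w) = d := by
    rwa [B.mulVec_add_eq_of_mulVec_eq_zero vY0 hBw]
  have hsame := (hφ vL0 vY0 hfeas).symm.trans (hφ vL0 (vY0 + w) hshifted)
  rw [dotProduct_add] at hsame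
  exact hJYw (by linarith)
end

section
/- (Attacker-computed equals actual flow perturbation, eq. (35) of the paper.) Let n be a positive integer, L a subset of Fin n, l_f, l_t ∈ L with l_f ≠ l_t, and x ∈ ℝ with x ≠ 0. Define Γ : Fin n → ℝ with Γ(l_f) = 1/x, Γ(l_t) = −1/x, and zero elsewhere, and Γ̄ : L → ℝ with Γ̄(l_f) = 1/x, Γ̄(l_t) = −1/x, and zero elsewhere. Let k : Fin n → ℝ and H a real n×n matrix satisfy the row-vector identity k·H = Γ (i.e., vecMul k H = Γ), and let k̄ : L → ℝ and H̄ a real L×L matrix satisfy k̄·H̄ = Γ̄. Let c : Fin n → ℝ vanish outside L and let c̄ be its restriction to L. Then k̄ · (H̄·c̄) = k · (H·c), i.e., K̄_l·H̄·c̄ = K_l·H·c. -/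
/-!
Moving `H` across the dot product gives `k ⬝ (H c) = (k H) ⬝ c = Γ ⬝ c`, and likewise
`k̄ ⬝ (H̄ c̄) = Γ̄ ⬝ c̄`. Since `Γ̄` is the restriction of `Γ` to `L` and `c` vanishes off `L`,
both sums only see the buses of `L`, where they agree term by term.
-/

open Matrix

theorem Matrix.dotProduct_subtype_of_eq_zero {ι R : Type*} [Fintype ι]
    [NonUnitalNonAssocSemiring R] (s : Finset ι) (u v : ι → R) (hv : ∀ i ∉ s, v i = 0) :
    (fun i : s => u i) ⬝ᵥ (fun i : s => v i) = u ⬝ᵥ v := by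
  rw [dotProduct, dotProduct, Finset.sum_coe_sort s (fun i => u i * v i)]
  exact Finset.sum_subset (Finset.subset_univ s) fun i _ hi => by rw [hv i hi, mul_zero]

theorem attacker_computed_flow_perturbation_general {n : ℕ}
    (L : Finset (Fin n))
    (lf lt : Fin n)
    (x : ℝ)
    (Γ : Fin n → ℝ)
    (hΓ : Γ = fun i => if i = lf then 1 / x else if i = lt then -(1 / x) else 0)
    (Γb : {i // i ∈ L} → ℝ)
    (hΓb : Γb = fun (i : {i // i ∈ L}) => if (i : Fin n) = lf then 1 / x
                         else if (i : Fin n) = lt then -(1 / x) else 0)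
    (k : Fin n → ℝ) (H : Matrix (Fin n) (Fin n) ℝ)
    (hkH : Matrix.vecMul k H = Γ)
    (kb : {i // i ∈ L} → ℝ) (Hb : Matrix {i // i ∈ L} {i // i ∈ L} ℝ)
    (hkbHb : Matrix.vecMul kb Hb = Γb)
    (c : Fin n → ℝ) (hc : ∀ i, i ∉ L → c i = 0)
    (cb : {i // i ∈ L} → ℝ) (hcb : cb = fun (i : {i // i ∈ L}) => c i) :
    kb ⬝ᵥ Hb.mulVec cb = k ⬝ᵥ H.mulVec c := by
  have hΓb_restrict : Γb = fun i : L => Γ i := by rw [hΓb, hΓ]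
  rw [dotProduct_mulVec, dotProduct_mulVec, hkbHb, hkH, hΓb_restrict, hcb]
  exact dotProduct_subtype_of_eq_zero L Γ c hc

/-- Attacker-computed equals actual flow perturbation (eq. (35)): if the global
row `k = K_l` satisfies `k·H = Γ`, the local row `k̄ = K̄_l` satisfies
`k̄·H̄ = Γ̄`, where `Γ, Γ̄` have the two nonzero entries `1/x` at `l_f` and
`−1/x` at `l_t`, and the attack vector `c` is supported inside `L` with
restriction `c̄`, then `k̄ ⬝ (H̄·c̄) = k ⬝ (H·c)`. -/
theorem attacker_computed_flow_perturbation {n : ℕ} (hn : 0 < n)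
    (L : Finset (Fin n))
    (lf lt : Fin n) (hlf : lf ∈ L) (hlt : lt ∈ L) (hne : lf ≠ lt)
    (x : ℝ) (hx : x ≠ 0)
    (Γ : Fin n → ℝ)
    (hΓ : Γ = fun i => if i = lf then 1 / x else if i = lt then -(1 / x) else 0)
    (Γb : {i // i ∈ L} → ℝ)
    (hΓb : Γb = fun (i : {i // i ∈ L}) => if (i : Fin n) = lf then 1 / x
                         else if (i : Fin n) = lt then -(1 / x) else 0)
    (k : Fin n → ℝ) (H : Matrix (Fin n) (Fin n) ℝ)
    (hkH : Matrix.vecMul k H = Γ)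
    (kb : {i // i ∈ L} → ℝ) (Hb : Matrix {i // i ∈ L} {i // i ∈ L} ℝ)
    (hkbHb : Matrix.vecMul kb Hb = Γb)
    (c : Fin n → ℝ) (hc : ∀ i, i ∉ L → c i = 0)
    (cb : {i // i ∈ L} → ℝ) (hcb : cb = fun (i : {i // i ∈ L}) => c i) :
    kb ⬝ᵥ Hb.mulVec cb = k ⬝ᵥ H.mulVec c :=
  attacker_computed_flow_perturbation_general L lf lt x Γ hΓ Γb hΓb k H hkH kb Hb hkbHb c hc cb hcb
end

section
/- (Theorem 2: attacker-computable upper bound on the physical target-line flow.) Let K be a real n_br×n matrix, G an n×n_g matrix, H an n×n matrix, P_G ∈ ℝ^{n_g}, P_D ∈ ℝ^n, Pmax ∈ ℝ^{n_br}, l a line index, and c ∈ ℝ^n an attack vector. Let L ⊆ Fin n, let l_f, l_t ∈ L with l_f ≠ l_t, x ≠ 0, and let Γ : Fin n → ℝ and Γ̄ : L → ℝ be the vectors with entries 1/x at l_f, −1/x at l_t, and zero elsewhere. Assume: (i) c(i) = 0 for all i ∉ L and c̄ is the restriction of c to L; (ii) the row K_l of K satisfies K_l·H = Γ, and the local row K̄_l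 and local matrix H̄ satisfy K̄_l·H̄ = Γ̄; (iii) the cyber flow P^c := K·(G·P_G − P_D + H·c) satisfies P^c_l ≤ Pmax_l. Then the physical flow P^p := K·(G·P_G − P_D) satisfies P^p_l ≤ Pmax_l − K̄_l·(H̄·c̄). In other words, the physical power flow on the target line l resulting from the attack vector c̄ is upper bounded by P_l^{ub} = Pmax_l − K̄_l·H̄·c̄, a quantity computable from the local network alone. -/
open Matrix

/-!
The cyber and physical flows on line `l` differ by `K_l·(H·c) = (K_l·H)·c = Γ_l·c`.
Since `Γ̄_l` is the restriction of `Γ_l` to the sub-network and the attack `c` is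
supported there, `Γ_l·c = Γ̄_l·c̄ = K̄_l·(H̄·c̄)`, which the attacker can evaluate; the
thermal limit on the cyber flow then bounds the physical flow.
-/

theorem dotProduct_eq_dotProduct_subtype_of_forall_notMem {ι R : Type*} [Fintype ι]
    [NonUnitalNonAssocSemiring R] (s : Finset ι) (v w : ι → R)
    (hw : ∀ i, i ∉ s → w i = 0) :
    v ⬝ᵥ w = (fun i : s => v i) ⬝ᵥ (fun i : s => w i) := by
  rw [dotProduct, dotProduct, Finset.sum_coe_sort s fun i => v i * w i]
  exact (Finset.sum_subset (Finset.subset_univ s) fun i _ hi => by rw [hw i hi, mul_zero]).symm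

theorem physical_flow_upper_bound_general {n n_br n_g : ℕ}
    (K : Matrix (Fin n_br) (Fin n) ℝ) (G : Matrix (Fin n) (Fin n_g) ℝ)
    (H : Matrix (Fin n) (Fin n) ℝ)
    (PG : Fin n_g → ℝ) (PD : Fin n → ℝ) (Pmax : Fin n_br → ℝ)
    (l : Fin n_br) (c : Fin n → ℝ)
    (L : Finset (Fin n))
    (lf lt : Fin n)
    (x : ℝ)
    (Γ : Fin n → ℝ)
    (hΓ : Γ = fun i => if i = lf then 1 / x else if i = lt then -(1 / x) else 0)
    (Γb : {i // i ∈ L} → ℝ)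
    (hΓb : Γb = fun (i : {i // i ∈ L}) => if (i : Fin n) = lf then 1 / x
                         else if (i : Fin n) = lt then -(1 / x) else 0)
    (hc : ∀ i, i ∉ L → c i = 0)
    (cb : {i // i ∈ L} → ℝ) (hcb : cb = fun (i : {i // i ∈ L}) => c i)
    (hKlH : Matrix.vecMul (K l) H = Γ)
    (kb : {i // i ∈ L} → ℝ) (Hb : Matrix {i // i ∈ L} {i // i ∈ L} ℝ)
    (hkbHb : Matrix.vecMul kb Hb = Γb)
    (hcyber : K.mulVec (G.mulVec PG - PD + H.mulVec c) l ≤ Pmax l) :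
    K.mulVec (G.mulVec PG - PD) l ≤ Pmax l - kb ⬝ᵥ Hb.mulVec cb := by
  have hΓb_restrict : Γb = fun i : L => Γ i := by
    subst hΓ hΓb
    rfl
  have hlocal : K l ⬝ᵥ H *ᵥ c = kb ⬝ᵥ Hb *ᵥ cb := by
    rw [dotProduct_mulVec, dotProduct_mulVec, hKlH, hkbHb, hΓb_restrict, hcb]
    exact dotProduct_eq_dotProduct_subtype_of_forall_notMem L Γ c hc
  have hsplit : (K *ᵥ (G *ᵥ PG - PD + H *ᵥ c)) l =
      (K *ᵥ (G *ᵥ PG - PD)) l + K l ⬝ᵥ H *ᵥ c := by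
    rw [mulVec_add]
    rfl
  linarith

/-- Theorem 2: attacker-computable upper bound on the physical target-line flow.
Under the PTDF structure `K_l·H = Γ` and `K̄_l·H̄ = Γ̄` (two nonzero entries
`1/x` at `l_f` and `−1/x` at `l_t`, with `l_f, l_t` inside the sub-network `L`),
an attack vector `c` supported inside `L` with restriction `c̄`, and the OPF
thermal limit `P^c_l ≤ Pmax_l` on the cyber flow, the physical flow satisfies
`P^p_l ≤ Pmax_l − K̄_l·(H̄·c̄)`. -/
theorem physical_flow_upper_bound {n n_br n_g : ℕ} (hn : 0 < n)
    (K : Matrix (Fin n_br) (Fin n) ℝ) (G : Matrix (Fin n) (Fin n_g) ℝ)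
    (H : Matrix (Fin n) (Fin n) ℝ)
    (PG : Fin n_g → ℝ) (PD : Fin n → ℝ) (Pmax : Fin n_br → ℝ)
    (l : Fin n_br) (c : Fin n → ℝ)
    (L : Finset (Fin n))
    (lf lt : Fin n) (hlf : lf ∈ L) (hlt : lt ∈ L) (hne : lf ≠ lt)
    (x : ℝ) (hx : x ≠ 0)
    (Γ : Fin n → ℝ)
    (hΓ : Γ = fun i => if i = lf then 1 / x else if i = lt then -(1 / x) else 0)
    (Γb : {i // i ∈ L} → ℝ)
    (hΓb : Γb = fun (i : {i // i ∈ L}) => if (i : Fin n) = lf then 1 / x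
                         else if (i : Fin n) = lt then -(1 / x) else 0)
    (hc : ∀ i, i ∉ L → c i = 0)
    (cb : {i // i ∈ L} → ℝ) (hcb : cb = fun (i : {i // i ∈ L}) => c i)
    (hKlH : Matrix.vecMul (K l) H = Γ)
    (kb : {i // i ∈ L} → ℝ) (Hb : Matrix {i // i ∈ L} {i // i ∈ L} ℝ)
    (hkbHb : Matrix.vecMul kb Hb = Γb)
    (hcyber : K.mulVec (G.mulVec PG - PD + H.mulVec c) l ≤ Pmax l) :
    K.mulVec (G.mulVec PG - PD) l ≤ Pmax l - kb ⬝ᵥ Hb.mulVec cb :=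
  physical_flow_upper_bound_general K G H PG PD Pmax l c L lf lt x Γ hΓ Γb hΓb hc cb hcb hKlH kb Hb
    hkbHb hcyber
end
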